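/- arXiv:2203.12396 — 2 statements merged into one kernel-verified Lean document; each statement's English description precedes it below -/
import Mathlib

section
/- Let a, β ∈ ℝ with a ≠ 0 and b₁ ∈ ℂ with b₁² ≠ a². Define ψ(x,y,t) = exp(i b₁ x + √(a² - b₁²)(i y - 2 b₁ t)) and φ(x,y,t) = ((b₁ + i√(a² - b₁²))/a)·ψ(x,y,t). Then (ψ, φ) satisfies the first Lax equation ψ_y = i ψ_x + a φ and φ_y = -i φ_x - a ψ. -/
open Complex

lemma key_deriv (k c d : ℂ) (y : ℝ) :
    deriv (fun y' : ℝ => k * Complex.exp (c + d * y')) y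
      = k * (d * Complex.exp (c + d * y)) := by
  have h : HasDerivAt (fun y' : ℝ => k * Complex.exp (c + d * y'))
      (k * (d * Complex.exp (c + d * y))) y := by
    have h1 := ((((hasDerivAt_id ((y : ℝ) : ℂ)).const_mul d).const_add c).cexp).const_mul k
    simpa [mul_comm] using h1.comp_ofReal
  exact h.deriv

/-- The exponential eigenfunctions ψ, φ satisfy the spatial part of the DS II
Lax pair with seed u = a, v = -a:  ψ_y = iψ_x + aφ,  φ_y = -iφ_x - aψ.
Here √ is the principal branch z ↦ z^(1/2). -/
theorem stmt_6 (a : ℝ) (ha : a ≠ 0) (b₁ : ℂ) (hb : b₁ ^ 2 ≠ (a : ℂ) ^ 2)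
    (s : ℂ) (hs : s = ((a : ℂ) ^ 2 - b₁ ^ 2) ^ ((1 : ℂ) / 2))
    (ψ φ : ℝ → ℝ → ℝ → ℂ)
    (hψ : ∀ x y t : ℝ, ψ x y t =
      Complex.exp (Complex.I * b₁ * x + s * (Complex.I * y - 2 * b₁ * t)))
    (hφ : ∀ x y t : ℝ, φ x y t = ((b₁ + Complex.I * s) / a) * ψ x y t) :
    ∀ x y t : ℝ,
      deriv (fun y' : ℝ => ψ x y' t) y =
        Complex.I * deriv (fun x' : ℝ => ψ x' y t) x + (a : ℂ) * φ x y t ∧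
      deriv (fun y' : ℝ => φ x y' t) y =
        -Complex.I * deriv (fun x' : ℝ => φ x' y t) x - (a : ℂ) * ψ x y t := by
  intro x y t
  have ha' : (a : ℂ) ≠ 0 := by exact_mod_cast ha
  have hz : (a : ℂ) ^ 2 - b₁ ^ 2 ≠ 0 := sub_ne_zero.2 (Ne.symm hb)
  have hs2 : s ^ 2 = (a : ℂ) ^ 2 - b₁ ^ 2 := by
    rw [sq, hs, ← Complex.cpow_add _ _ hz]
    norm_num
  set k : ℂ := (b₁ + Complex.I * s) / a with hk
  have eψy : (fun y' : ℝ => ψ x y' t)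
      = fun y' : ℝ => (1 : ℂ) * Complex.exp
          ((Complex.I * b₁ * x - s * (2 * b₁ * t)) + (s * Complex.I) * y') := by
    funext y'; rw [hψ, one_mul]; congr 1; ring
  have eψx : (fun x' : ℝ => ψ x' y t)
      = fun x' : ℝ => (1 : ℂ) * Complex.exp
          ((s * (Complex.I * y - 2 * b₁ * t)) + (Complex.I * b₁) * x') := by
    funext x'; rw [hψ, one_mul]; congr 1; ring
  have eφy : (fun y' : ℝ => φ x y' t)
      = fun y' : ℝ => k * Complex.exp
          ((Complex.I * b₁ * x - s * (2 * b₁ * t)) + (s * Complex.I) * y') := by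
    funext y'; rw [hφ, hψ]; congr 2; ring
  have eφx : (fun x' : ℝ => φ x' y t)
      = fun x' : ℝ => k * Complex.exp
          ((s * (Complex.I * y - 2 * b₁ * t)) + (Complex.I * b₁) * x') := by
    funext x'; rw [hφ, hψ]; congr 2; ring
  have hE1 : Complex.exp ((Complex.I * b₁ * x - s * (2 * b₁ * t)) + (s * Complex.I) * y)
      = ψ x y t := by rw [hψ]; congr 1; ring
  have hE2 : Complex.exp ((s * (Complex.I * y - 2 * b₁ * t)) + (Complex.I * b₁) * x)
      = ψ x y t := by rw [hψ]; congr 1; ring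
  rw [eψy, eψx, eφy, eφx, key_deriv, key_deriv, key_deriv, key_deriv, hE1, hE2, hφ x y t]
  constructor
  · have h0 : (1 : ℂ) * (s * Complex.I) - (Complex.I * (1 * (Complex.I * b₁)) + a * k) = 0 := by
      rw [hk]
      field_simp
      linear_combination -b₁ * Complex.I_sq
    linear_combination ψ x y t * h0
  · have h0 : k * (s * Complex.I) - (-Complex.I * (k * (Complex.I * b₁)) - a) = 0 := by
      rw [hk]
      field_simp
      linear_combination (b₁*Complex.I*s + b₁^2 + s^2) * Complex.I_sq - hs2
    linear_combination ψ x y t * h0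
end

section
/- Let a, β > 0, M = √(a²+β²), and define ψ₁(X,Y) = ((iMX + βY)/M)·E and φ₁(X,Y) = ((M+β)(1 - MX + iβY)/(Ma))·E where E = exp(-β²X + i(2M³t + MβY)) (with the moving-frame variable Y). Then |ψ₁|² + |φ₁|² = (|E|²/(M²a²))·[a²(M²X² + β²Y²) + (M+β)²((1-MX)² + β²Y²)], which is strictly positive except at no real point (X,Y) when a > 0. -/
open Complex Real

/-- For ψ₁ = ((iMX+βY)/M)·E, φ₁ = ((M+β)(1-MX+iβY)/(Ma))·E one has
|ψ₁|²+|φ₁|² = (|E|²/(M²a²))[a²(M²X²+β²Y²) + (M+β)²((1-MX)²+β²Y²)],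
which is strictly positive at every real point (X,Y). -/
theorem stmt_9 (a β t : ℝ) (ha : 0 < a) (hβ : 0 < β)
    (M : ℝ) (hM : M = Real.sqrt (a ^ 2 + β ^ 2))
    (E : ℝ → ℝ → ℂ)
    (hE : ∀ X Y : ℝ, E X Y =
      Complex.exp (-(β ^ 2 : ℝ) * X + Complex.I * ((2 * M ^ 3 * t : ℝ) + (M * β * Y : ℝ))))
    (ψ₁ φ₁ : ℝ → ℝ → ℂ)
    (hψ : ∀ X Y : ℝ, ψ₁ X Y = ((Complex.I * (M * X : ℝ) + (β * Y : ℝ)) / (M : ℂ)) * E X Y)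
    (hφ : ∀ X Y : ℝ, φ₁ X Y =
      (((M + β : ℝ) : ℂ) * (1 - (M * X : ℝ) + Complex.I * (β * Y : ℝ)) / ((M * a : ℝ) : ℂ))
        * E X Y) :
    ∀ X Y : ℝ,
      ‖ψ₁ X Y‖ ^ 2 + ‖φ₁ X Y‖ ^ 2 =
        (‖E X Y‖ ^ 2 / (M ^ 2 * a ^ 2)) *
          (a ^ 2 * (M ^ 2 * X ^ 2 + β ^ 2 * Y ^ 2)
            + (M + β) ^ 2 * ((1 - M * X) ^ 2 + β ^ 2 * Y ^ 2)) ∧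
      0 < ‖ψ₁ X Y‖ ^ 2 + ‖φ₁ X Y‖ ^ 2 := by
  intro X Y
  have hM0 : 0 < M := by
    rw [hM]; exact Real.sqrt_pos.2 (by positivity)
  have hE0 : ‖E X Y‖ > 0 := by
    rw [hE]; exact norm_pos_iff.mpr (Complex.exp_ne_zero _)
  have h1 : ‖ψ₁ X Y‖ ^ 2 =
      ((M*X)^2+(β*Y)^2)/M^2 * ‖E X Y‖^2 := by
    rw [hψ, norm_mul, mul_pow, norm_div, div_pow, Complex.sq_norm, Complex.sq_norm]
    simp [Complex.normSq_apply]
    exact Or.inl (by ring)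
  have h2 : ‖φ₁ X Y‖ ^ 2 =
      (M+β)^2*((1-M*X)^2+(β*Y)^2)/(M*a)^2 * ‖E X Y‖^2 := by
    rw [hφ, norm_mul, mul_pow, norm_div, div_pow, Complex.sq_norm, Complex.sq_norm]
    simp [Complex.normSq_apply]
    exact Or.inl (by ring)
  have heq : ‖ψ₁ X Y‖ ^ 2 + ‖φ₁ X Y‖ ^ 2 =
      (‖E X Y‖ ^ 2 / (M ^ 2 * a ^ 2)) *
        (a ^ 2 * (M ^ 2 * X ^ 2 + β ^ 2 * Y ^ 2)
          + (M + β) ^ 2 * ((1 - M * X) ^ 2 + β ^ 2 * Y ^ 2)) := by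
    rw [h1, h2]
    field_simp
  refine ⟨heq, ?_⟩
  rw [heq]
  have hbr : 0 < a ^ 2 * (M ^ 2 * X ^ 2 + β ^ 2 * Y ^ 2)
      + (M + β) ^ 2 * ((1 - M * X) ^ 2 + β ^ 2 * Y ^ 2) := by
    rcases eq_or_ne (M * X) 0 with h | h
    · have : (1 - M*X)^2 = 1 := by rw [h]; ring
      nlinarith [sq_nonneg (β*Y), sq_nonneg (M*X)]
    · have : 0 < (M*X)^2 := by positivity
      nlinarith [sq_nonneg (β*Y), sq_nonneg (1 - M*X), mul_pos (mul_pos ha ha) this, sq_nonneg (M+β)]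
  positivity
end
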